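/- Every bipartite graph G with at least 2 vertices is max-well-behaved; that is, if W denotes the maximum DC-cost over all HC-trees of G, then for every k ≥ 1 the maximum DC-cost over all HC-trees of the disjoint union G^{(k)} of k copies of G equals k²·W. -/

import Mathlib

/-- A rooted binary tree whose leaves are labelled by vertices of type `V`.
Every internal node has exactly two children. -/
inductive HCTree (V : Type) where
  | leaf : V → HCTree V
  | node : HCTree V → HCTree V → HCTree V

namespace HCTree

/-- The list of leaf labels of an HC-tree, from left to right. -/
def leaves {V : Type} : HCTree V → List V
  | leaf v => [v]
  | node l r => leaves l ++ leaves r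

open Classical in
/-- The Dasgupta cost of an HC-tree on a graph `G`: the sum over all edges `uv` of `G`
of the number of leaves of the subtree rooted at the least common ancestor of `u` and `v`.
Equivalently (as computed here, recursively), at each internal node we add
(number of leaves below the node) times (number of edges split at that node). -/
noncomputable def dcCost {V : Type} (G : SimpleGraph V) : HCTree V → ℕ
  | leaf _ => 0
  | node l r =>
      dcCost G l + dcCost G r +
        (l.leaves.length + r.leaves.length) *
          (l.leaves.map (fun u => r.leaves.countP (fun v => decide (G.Adj u v)))).sum

end HCTree

open HCTree

/-- `T` together with the implicit leaf labelling is an HC-tree of a graph on vertex set `V`: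
the leaf labels are pairwise distinct and every vertex occurs as a leaf label,
i.e. the labelling is a bijection between `V` and the leaves of `T`. -/
def IsHCTree {V : Type} (T : HCTree V) : Prop :=
  T.leaves.Nodup ∧ ∀ v : V, v ∈ T.leaves

/-- `W` is the maximum DC-cost over all HC-trees of `G`. -/
def IsMaxCost {V : Type} (G : SimpleGraph V) (W : ℕ) : Prop :=
  (∃ T : HCTree V, IsHCTree T ∧ dcCost G T = W) ∧
  ∀ T : HCTree V, IsHCTree T → dcCost G T ≤ W

/-- `W` is the minimum DC-cost over all HC-trees of `G`. -/
def IsMinCost {V : Type} (G : SimpleGraph V) (W : ℕ) : Prop :=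
  (∃ T : HCTree V, IsHCTree T ∧ dcCost G T = W) ∧
  ∀ T : HCTree V, IsHCTree T → W ≤ dcCost G T

/-- The disjoint union `G^(k)` of `k` copies of `G`, on vertex set `V × Fin k`. -/
def copies {V : Type} (G : SimpleGraph V) (k : ℕ) : SimpleGraph (V × Fin k) where
  Adj a b := a.2 = b.2 ∧ G.Adj a.1 b.1
  symm := ⟨fun _ _ h => ⟨h.1.symm, h.2.symm⟩⟩
  loopless := ⟨fun a h => G.loopless.irrefl a.1 h.2⟩

/-! Each edge contributes at most `|V|` to the Dasgupta cost, so every HC-tree of `G` costs at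
most `|V| · |E|`. For a bipartite graph the bound is attained by splitting the two colour
classes at the root, so `W = |V| · |E|`. The disjoint union `G^(k)` is again bipartite, with
`k |V|` vertices and `k |E|` edges, hence its maximum is `k² |V| |E| = k² W`. -/

namespace HCTree

variable {V : Type}

theorem nonempty : HCTree V → Nonempty V
  | leaf v => ⟨v⟩
  | node l _ => l.nonempty

theorem exists_leaves_eq : ∀ L : List V, L ≠ [] → ∃ T : HCTree V, T.leaves = L
  | [], h => absurd rfl h
  | [v], _ => ⟨leaf v, rfl⟩
  | v :: w :: L, _ => by
    obtain ⟨T, hT⟩ := exists_leaves_eq (w :: L) (List.cons_ne_nil w L)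
    exact ⟨node (leaf v) T, by rw [leaves, hT]; rfl⟩

end HCTree

theorem IsMaxCost.unique {V : Type} {G : SimpleGraph V} {W W' : ℕ} (hW : IsMaxCost G W)
    (hW' : IsMaxCost G W') : W = W' := by
  obtain ⟨⟨T, hT, rfl⟩, hle⟩ := hW
  obtain ⟨⟨T', hT', rfl⟩, hle'⟩ := hW'
  exact le_antisymm (hle' T hT) (hle T' hT')

section crossCount

variable {V : Type} (G : SimpleGraph V)

open Classical

noncomputable def crossCount (l r : List V) : ℕ :=
  (l.map fun u => r.countP fun v => decide (G.Adj u v)).sum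

theorem dcCost_node (l r : HCTree V) :
    dcCost G (.node l r) = dcCost G l + dcCost G r +
      (l.leaves.length + r.leaves.length) * crossCount G l.leaves r.leaves :=
  rfl

theorem crossCount_cons_left (u : V) (l r : List V) :
    crossCount G (u :: l) r = r.countP (fun v => decide (G.Adj u v)) + crossCount G l r := by
  simp [crossCount]

theorem crossCount_cons_right (v : V) (l r : List V) :
    crossCount G l (v :: r) = crossCount G l r + l.countP (fun u => decide (G.Adj u v)) := by
  induction l with
  | nil => rfl
  | cons u l ih =>
    rw [crossCount_cons_left, crossCount_cons_left, List.countP_cons, List.countP_cons, ih]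
    ring

theorem crossCount_comm (l r : List V) : crossCount G l r = crossCount G r l := by
  induction l generalizing r with
  | nil => simp [crossCount]
  | cons u l ih =>
    rw [crossCount_cons_left, crossCount_cons_right, ih, Nat.add_comm]
    simp only [G.adj_comm]

theorem crossCount_append_left (l₁ l₂ r : List V) :
    crossCount G (l₁ ++ l₂) r = crossCount G l₁ r + crossCount G l₂ r := by
  simp [crossCount]

theorem crossCount_append_right (l r₁ r₂ : List V) :
    crossCount G l (r₁ ++ r₂) = crossCount G l r₁ + crossCount G l r₂ := by
  simp [crossCount, List.countP_append, List.sum_map_add]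

theorem crossCount_append_self (l r : List V) :
    crossCount G (l ++ r) (l ++ r) = crossCount G l l + crossCount G r r + 2 * crossCount G l r := by
  rw [crossCount_append_left, crossCount_append_right, crossCount_append_right,
    crossCount_comm G r l]
  ring

theorem crossCount_eq_zero_iff {l r : List V} :
    crossCount G l r = 0 ↔ ∀ u ∈ l, ∀ v ∈ r, ¬ G.Adj u v := by
  simp [crossCount, List.sum_eq_zero_iff, List.countP_eq_zero]

end crossCount

section cost

variable {V : Type} (G : SimpleGraph V)

/-- `crossCount G L L` counts ordered adjacent pairs, i.e. every edge twice; so this says that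
each edge contributes at most the number of leaves. -/
theorem two_mul_dcCost_le :
    ∀ T : HCTree V, 2 * dcCost G T ≤ T.leaves.length * crossCount G T.leaves T.leaves
  | .leaf _ => Nat.zero_le _
  | .node l r => by
    have hl := two_mul_dcCost_le l
    have hr := two_mul_dcCost_le r
    rw [dcCost_node, leaves, crossCount_append_self, List.length_append]
    nlinarith [Nat.zero_le (l.leaves.length * crossCount G r.leaves r.leaves),
      Nat.zero_le (r.leaves.length * crossCount G l.leaves l.leaves)]

theorem dcCost_eq_zero_of_crossCount_eq_zero {T : HCTree V}
    (h : crossCount G T.leaves T.leaves = 0) : dcCost G T = 0 := by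
  have := two_mul_dcCost_le G T
  rw [h, Nat.mul_zero] at this
  omega

/-- Equality in `two_mul_dcCost_le`: every edge is split at the root. -/
theorem two_mul_dcCost_node_eq {l r : HCTree V} (hl : crossCount G l.leaves l.leaves = 0)
    (hr : crossCount G r.leaves r.leaves = 0) :
    2 * dcCost G (.node l r) = (l.leaves ++ r.leaves).length *
      crossCount G (l.leaves ++ r.leaves) (l.leaves ++ r.leaves) := by
  rw [dcCost_node, crossCount_append_self, List.length_append, hl, hr,
    dcCost_eq_zero_of_crossCount_eq_zero G hl, dcCost_eq_zero_of_crossCount_eq_zero G hr]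
  ring

theorem exists_leaves_eq_append_two_mul_dcCost_eq {A B : List V} (hAB : A ++ B ≠ [])
    (hA : crossCount G A A = 0) (hB : crossCount G B B = 0) :
    ∃ T : HCTree V, T.leaves = A ++ B ∧
      2 * dcCost G T = (A ++ B).length * crossCount G (A ++ B) (A ++ B) := by
  by_cases hdeg : A = [] ∨ B = []
  · obtain ⟨T, hT⟩ := HCTree.exists_leaves_eq _ hAB
    have h0 : crossCount G (A ++ B) (A ++ B) = 0 := by
      rcases hdeg with rfl | rfl <;> simpa
    refine ⟨T, hT, ?_⟩
    rw [dcCost_eq_zero_of_crossCount_eq_zero G (by rwa [hT]), h0, Nat.mul_zero, Nat.mul_zero]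
  obtain ⟨hA₀, hB₀⟩ := not_or.mp hdeg
  obtain ⟨TA, rfl⟩ := HCTree.exists_leaves_eq A hA₀
  obtain ⟨TB, rfl⟩ := HCTree.exists_leaves_eq B hB₀
  exact ⟨.node TA TB, rfl, two_mul_dcCost_node_eq G hA hB⟩

end cost

section complete

variable {V : Type} [Fintype V]

theorem IsHCTree.coe_leaves {T : HCTree V} (hT : IsHCTree T) :
    (T.leaves : Multiset V) = Finset.univ.val :=
  congrArg Finset.val <|
    Finset.eq_univ_iff_forall (s := ⟨(T.leaves : Multiset V), hT.1⟩) |>.mpr hT.2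

theorem IsHCTree.length_leaves {T : HCTree V} (hT : IsHCTree T) :
    T.leaves.length = Fintype.card V := by
  rw [← Multiset.coe_card, hT.coe_leaves]
  rfl

open Classical in
theorem IsHCTree.crossCount_leaves (G : SimpleGraph V) {T : HCTree V} (hT : IsHCTree T) :
    crossCount G T.leaves T.leaves = 2 * G.edgeFinset.card := by
  have hdeg (u : V) : Multiset.countP (G.Adj u) Finset.univ.val = G.degree u := by
    rw [← G.card_neighborFinset_eq_degree, G.neighborFinset_eq_filter, Finset.card_def,
      Finset.filter_val, Multiset.countP_eq_card_filter]
  rw [← G.sum_degrees_eq_twice_card_edges, crossCount, ← Multiset.sum_coe, ← Multiset.map_coe]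
  simp only [← Multiset.coe_countP, hT.coe_leaves, hdeg]
  rfl

end complete

@[simp]
theorem copies_adj {V : Type} (G : SimpleGraph V) (k : ℕ) {a b : V × Fin k} :
    (copies G k).Adj a b ↔ a.2 = b.2 ∧ G.Adj a.1 b.1 :=
  Iff.rfl

section bipartite

variable {V : Type} [Fintype V]

open Classical

theorem isMaxCost_of_coloring [Nonempty V] (G : SimpleGraph V) (c : V → Bool)
    (hc : ∀ u v, G.Adj u v → c u ≠ c v) :
    IsMaxCost G (Fintype.card V * G.edgeFinset.card) := by
  refine ⟨?_, fun T hT => ?_⟩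
  · set L := (Finset.univ : Finset V).toList
    have hperm := List.filter_append_perm c L
    have hmem (v : V) : v ∈ L.filter c ++ L.filter (fun v => !c v) :=
      hperm.mem_iff.mpr (Finset.mem_toList.mpr (Finset.mem_univ v))
    have hmono (p : V → Bool) (hp : ∀ u v, p u = true → p v = true → c u = c v) :
        crossCount G (L.filter p) (L.filter p) = 0 :=
      (crossCount_eq_zero_iff G).mpr fun u hu v hv huv =>
        hc u v huv (hp u v (List.of_mem_filter hu) (List.of_mem_filter hv))
    obtain ⟨T, hTL, hcost⟩ := exists_leaves_eq_append_two_mul_dcCost_eq G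
      (List.ne_nil_of_mem (hmem (Classical.arbitrary V)))
      (hmono c fun u v hu hv => hu.trans hv.symm)
      (hmono (fun v => !c v) fun u v hu hv => by simp_all)
    have hT : IsHCTree T := by
      rw [IsHCTree, hTL]
      exact ⟨hperm.nodup_iff.mpr (Finset.nodup_toList _), hmem⟩
    refine ⟨T, hT, ?_⟩
    rw [← hTL, hT.length_leaves, hT.crossCount_leaves] at hcost
    linarith
  · have hle := two_mul_dcCost_le G T
    rw [hT.length_leaves, hT.crossCount_leaves] at hle
    linarith

theorem copies_degree (G : SimpleGraph V) (k : ℕ) (u : V) (i : Fin k) :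
    (copies G k).degree (u, i) = G.degree u := by
  rw [← SimpleGraph.card_neighborFinset_eq_degree, ← SimpleGraph.card_neighborFinset_eq_degree]
  refine Finset.card_nbij' Prod.fst (·, i) ?_ ?_ ?_ ?_ <;>
    simp +contextual [Set.MapsTo, Set.LeftInvOn, Set.RightInvOn]

theorem card_edgeFinset_copies (G : SimpleGraph V) (k : ℕ) :
    (copies G k).edgeFinset.card = k * G.edgeFinset.card := by
  have h := (copies G k).sum_degrees_eq_twice_card_edges
  simp only [Fintype.sum_prod_type, copies_degree, Finset.sum_const, Finset.card_univ,
    Fintype.card_fin, smul_eq_mul, ← Finset.mul_sum, G.sum_degrees_eq_twice_card_edges] at h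
  linarith

end bipartite

theorem bipartite_maxWellBehaved_general {V : Type} [Fintype V] (G : SimpleGraph V) (c : V → Bool)
    (hc : ∀ u v : V, G.Adj u v → c u ≠ c v)
    (W : ℕ) (hW : IsMaxCost G W) (k : ℕ) (hk : 1 ≤ k) :
    IsMaxCost (copies G k) (k ^ 2 * W) := by
  have : Nonempty V := hW.1.choose.nonempty
  have : Nonempty (Fin k) := ⟨⟨0, hk⟩⟩
  rw [hW.unique (isMaxCost_of_coloring G c hc)]
  convert isMaxCost_of_coloring (copies G k) (c ∘ Prod.fst) (fun u v h => hc _ _ h.2) using 1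
  rw [Fintype.card_prod, Fintype.card_fin, card_edgeFinset_copies]
  ring

/-- Every bipartite graph `G` with at least 2 vertices is
max-well-behaved: if `W` is the maximum DC-cost over HC-trees of `G`, then for every
`k ≥ 1` the maximum DC-cost over HC-trees of the disjoint union `G^(k)` equals `k² W`. -/
theorem bipartite_maxWellBehaved {V : Type} [Fintype V] (G : SimpleGraph V) (c : V → Bool)
    (hc : ∀ u v : V, G.Adj u v → c u ≠ c v) (hn : 2 ≤ Fintype.card V)
    (W : ℕ) (hW : IsMaxCost G W) (k : ℕ) (hk : 1 ≤ k) :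
    IsMaxCost (copies G k) (k ^ 2 * W) :=
  bipartite_maxWellBehaved_general G c hc W hW k hk
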